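/- Let p be a prime and V a finite-dimensional vector space over ZMod p. Let P be a subgroup of the group of linear automorphisms of V such that every element of P has order a power of p and every element of P is a p-th power of some element of P (P is p-divisible). Then P is the trivial subgroup. -/

import Mathlib

/-!
In characteristic `p`, an automorphism `x` with `x ^ p ^ m = 1` is unipotent, since
`(x - 1) ^ p ^ m = x ^ p ^ m - 1 = 0`. A nilpotent endomorphism of an `n`-dimensional space
satisfies `N ^ n = 0` (Cayley–Hamilton), so `x ^ p ^ k - 1 = (x - 1) ^ p ^ k = 0` as soon as
`n ≤ p ^ k`. Hence `P` has exponent dividing `p ^ k`, while `p`-divisibility makes every element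
of `P` a `p ^ k`-th power of an element of `P`.
-/

open Module

lemma IsNilpotent.pow_finrank_eq_zero {R M : Type*} [CommRing R] [IsDomain R] [AddCommGroup M]
    [Module R M] [Module.Finite R M] [Module.Free R M] {f : Module.End R M}
    (hf : IsNilpotent f) : f ^ finrank R M = 0 := by
  simpa [hf.charpoly_eq_X_pow_finrank] using f.aeval_self_charpoly

section CharP

variable {A : Type*} [Ring A] (p : ℕ) [ExpChar A p] {a : A}

lemma isNilpotent_sub_one_of_pow_expChar_pow_eq_one {m : ℕ} (ha : a ^ p ^ m = 1) :
    IsNilpotent (a - 1) :=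
  ⟨p ^ m, by rw [sub_pow_expChar_pow_of_commute p m (Commute.one_right a), ha, one_pow, sub_self]⟩

lemma pow_expChar_pow_eq_one_of_sub_one_pow_eq_zero {n k : ℕ} (ha : (a - 1) ^ n = 0)
    (hn : n ≤ p ^ k) : a ^ p ^ k = 1 := by
  rw [← sub_eq_zero, ← one_pow (p ^ k), ← sub_pow_expChar_pow_of_commute p k (Commute.one_right a)]
  exact pow_eq_zero_of_le hn ha

end CharP

lemma Module.End.pow_expChar_pow_eq_one_of_finrank_le {K V : Type*} [Field K]
    (p : ℕ) [ExpChar K p] [AddCommGroup V] [Module K V] [FiniteDimensional K V]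
    {f : Module.End K V} {m k : ℕ} (hf : f ^ p ^ m = 1) (hk : finrank K V ≤ p ^ k) :
    f ^ p ^ k = 1 := by
  rcases subsingleton_or_nontrivial V with _ | _
  · exact Subsingleton.elim _ _
  have : ExpChar (Module.End K V) p :=
    expChar_of_injective_algebraMap (algebraMap K (Module.End K V)).injective p
  exact pow_expChar_pow_eq_one_of_sub_one_pow_eq_zero p
    (isNilpotent_sub_one_of_pow_expChar_pow_eq_one p hf).pow_finrank_eq_zero hk

lemma LinearEquiv.pow_expChar_pow_eq_one_of_finrank_le {K V : Type*} [Field K]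
    (p : ℕ) [ExpChar K p] [AddCommGroup V] [Module K V] [FiniteDimensional K V]
    {f : V ≃ₗ[K] V} {m k : ℕ} (hf : f ^ p ^ m = 1) (hk : finrank K V ≤ p ^ k) :
    f ^ p ^ k = 1 := by
  let φ := LinearEquiv.automorphismGroup.toLinearMapMonoidHom (R := K) (M := V)
  have hφf : φ f ^ p ^ m = 1 := by rw [← map_pow, hf, map_one]
  apply (LinearEquiv.toLinearMap_injective : Function.Injective φ)
  show φ (f ^ p ^ k) = φ 1
  rw [map_pow, map_one]
  exact Module.End.pow_expChar_pow_eq_one_of_finrank_le p hφf hk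

lemma Subgroup.exists_pow_pow_eq_of_forall_exists_pow_eq {G : Type*} [Group G] {H : Subgroup G}
    {p : ℕ} (hdiv : ∀ y ∈ H, ∃ x ∈ H, x ^ p = y) (k : ℕ) {y : G} (hy : y ∈ H) :
    ∃ x ∈ H, x ^ p ^ k = y := by
  induction k generalizing y with
  | zero => exact ⟨y, hy, pow_one y⟩
  | succ k ih =>
    obtain ⟨z, hz, rfl⟩ := hdiv y hy
    obtain ⟨x, hx, rfl⟩ := ih hz
    exact ⟨x, hx, by rw [pow_succ, pow_mul]⟩

/-- If `p` is prime, `V` is a finite-dimensional vector space over `ZMod p`, and `P` is a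
subgroup of the group of linear automorphisms of `V` such that every element of `P` has
`p`-power order and every element of `P` is a `p`-th power of an element of `P`, then `P`
is trivial. -/
theorem stmt4 (p : ℕ) [Fact p.Prime] (V : Type*) [AddCommGroup V] [Module (ZMod p) V]
    [FiniteDimensional (ZMod p) V] (P : Subgroup (V ≃ₗ[ZMod p] V))
    (horder : ∀ x ∈ P, ∃ m : ℕ, x ^ (p ^ m) = 1)
    (hdiv : ∀ y ∈ P, ∃ x ∈ P, x ^ p = y) :
    P = ⊥ := by
  set k := finrank (ZMod p) V
  have hk : k ≤ p ^ k := (Nat.lt_pow_self (Fact.out : p.Prime).one_lt).le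
  have hexp : ∀ x ∈ P, x ^ p ^ k = 1 := fun x hx =>
    (horder x hx).elim fun _ hm => LinearEquiv.pow_expChar_pow_eq_one_of_finrank_le p hm hk
  refine (Subgroup.eq_bot_iff_forall P).2 fun y hy => ?_
  obtain ⟨x, hx, rfl⟩ := Subgroup.exists_pow_pow_eq_of_forall_exists_pow_eq hdiv k hy
  exact hexp x hx
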